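/- arXiv:2602.16407 — 3 statements merged into one kernel-verified Lean document; each statement's English description precedes it below -/
import Mathlib

section
/- If w: Ω → ℝ² is a weakly differentiable map w = (u,v) on an open set Ω ⊂ ℝ² and at almost every x ∈ Ω the gradient matrix ∇w(x) = [[∂₁u, ∂₂u],[∂₁v, ∂₂v]] belongs to the set 𝒦_Λ, then there exists a measurable diagonal matrix field A(x) = diag(λ₁(x), λ₂(x)) with 1/Λ ≤ λ₁, λ₂ ≤ Λ a.e. such that A(x)∇u(x) + ∇⊥v(x) = 0 a.e. in Ω, and consequently div(A∇u) = 0 in the distributional sense. -/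
open Matrix MeasureTheory

/-- The set 𝒦_Λ of matrices [[a,b],[c,d]] with A(a,b)ᵀ + (−d,c)ᵀ = 0 for some
A = diag(λ,α), λ ∈ {Λ, Λ⁻¹}, α ∈ [Λ⁻¹, Λ]. -/
def Kset (Λ : ℝ) : Set (Matrix (Fin 2) (Fin 2) ℝ) :=
  {M | ∃ lam alpha : ℝ, (lam = Λ ∨ lam = Λ⁻¹) ∧ alpha ∈ Set.Icc Λ⁻¹ Λ ∧
    lam * M 0 0 - M 1 1 = 0 ∧ alpha * M 0 1 + M 1 0 = 0}

open Set Function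

noncomputable def psiA (φ : (Fin 2 → ℝ) → ℝ) (j : Fin 2) (x : Fin 2 → ℝ) : ℝ :=
  fderiv ℝ φ x (Pi.single j 1)

noncomputable def gA (w : (Fin 2 → ℝ) → (Fin 2 → ℝ)) (φ : (Fin 2 → ℝ) → ℝ)
    (i : Fin 2) (x : Fin 2 → ℝ) : ℝ :=
  if i = 0 then -(w x 1 * psiA φ 1 x) else w x 1 * psiA φ 0 x

lemma gA_eq_zero {w φ} {x : Fin 2 → ℝ} (hx : fderiv ℝ φ x = 0) (i : Fin 2) :
    gA w φ i x = 0 := by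
  simp [gA, psiA, hx]

lemma aux_div (Ω : Set (Fin 2 → ℝ)) (hΩ : IsOpen Ω)
    (w : (Fin 2 → ℝ) → (Fin 2 → ℝ)) (hw : ∀ x ∈ Ω, DifferentiableAt ℝ w x)
    (φ : (Fin 2 → ℝ) → ℝ) (hφ : ContDiff ℝ (⊤ : ℕ∞) φ) (hφc : HasCompactSupport φ)
    (hsupp : tsupport φ ⊆ Ω)
    (hi : IntegrableOn (fun x => fderiv ℝ w x (Pi.single 1 1) 1 * fderiv ℝ φ x (Pi.single 0 1)
      - fderiv ℝ w x (Pi.single 0 1) 1 * fderiv ℝ φ x (Pi.single 1 1)) Ω) :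
    ∫ x in Ω, (fderiv ℝ w x (Pi.single 1 1) 1 * fderiv ℝ φ x (Pi.single 0 1)
      - fderiv ℝ w x (Pi.single 0 1) 1 * fderiv ℝ φ x (Pi.single 1 1)) = 0 := by
  classical
  set h : (Fin 2 → ℝ) → ℝ := fun x =>
    fderiv ℝ w x (Pi.single 1 1) 1 * fderiv ℝ φ x (Pi.single 0 1)
      - fderiv ℝ w x (Pi.single 0 1) 1 * fderiv ℝ φ x (Pi.single 1 1) with hdef
  -- fderiv φ vanishes off tsupport φ
  have hfd0 : ∀ x ∉ tsupport φ, fderiv ℝ φ x = 0 := fun x hx =>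
    Function.notMem_support.mp (fun hs => hx (support_fderiv_subset ℝ hs))
  have hh0 : ∀ x ∉ tsupport φ, h x = 0 := by
    intro x hx; simp [hdef, hfd0 x hx]
  -- smoothness of fderiv φ
  have hΦ : ContDiff ℝ 1 (fderiv ℝ φ) := hφ.fderiv_right (WithTop.coe_le_coe.mpr le_top)
  have hψd : ∀ (j : Fin 2) (x), HasFDerivAt (psiA φ j)
      (((fderiv ℝ (fderiv ℝ φ) x).flip) (Pi.single j 1)) x := by
    intro j x
    have h1 := ((hΦ.differentiable one_ne_zero x).hasFDerivAt).clm_apply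
      (hasFDerivAt_const (Pi.single j 1 : Fin 2 → ℝ) x)
    simp at h1; exact h1
  -- differentiability of g off Ω
  have hgev : ∀ (i : Fin 2) (x), x ∉ Ω → gA w φ i =ᶠ[nhds x] (fun _ => 0) := by
    intro i x hx
    have hx' : x ∉ tsupport φ := fun hh => hx (hsupp hh)
    filter_upwards [(isClosed_tsupport φ).isOpen_compl.mem_nhds hx'] with y hy
    exact gA_eq_zero (hfd0 y hy) i
  have hv : ∀ x ∈ Ω, HasFDerivAt (fun y => w y 1)
      ((ContinuousLinearMap.proj 1).comp (fderiv ℝ w x)) x := by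
    intro x hx
    exact ((ContinuousLinearMap.proj (1 : Fin 2) :
        (Fin 2 → ℝ) →L[ℝ] ℝ).hasFDerivAt.comp x (hw x hx).hasFDerivAt).congr_of_eventuallyEq
      (Filter.Eventually.of_forall fun y => rfl)
  have hgd : ∀ (i : Fin 2) (x), DifferentiableAt ℝ (gA w φ i) x := by
    intro i x
    by_cases hx : x ∈ Ω
    · have h1 : DifferentiableAt ℝ (fun y => w y 1 * psiA φ 1 y) x :=
        (hv x hx).differentiableAt.mul (hψd 1 x).differentiableAt
      have h0 : DifferentiableAt ℝ (fun y => w y 1 * psiA φ 0 y) x :=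
        (hv x hx).differentiableAt.mul (hψd 0 x).differentiableAt
      unfold gA
      fin_cases i
      · simpa using h1.neg
      · simpa using h0
    · exact (differentiableAt_const (0:ℝ)).congr_of_eventuallyEq (hgev i x hx)
  -- divergence identity
  have hdiv : ∀ x, (∑ i : Fin 2, fderiv ℝ (gA w φ i) x (Pi.single i 1)) = h x := by
    intro x
    rw [Fin.sum_univ_two]
    by_cases hx : x ∈ Ω
    · have e0 : gA w φ 0 = fun y => -(w y 1 * psiA φ 1 y) := by funext y; simp [gA]
      have e1 : gA w φ 1 = fun y => w y 1 * psiA φ 0 y := by funext y; simp [gA]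
      have hm1 : HasFDerivAt (fun y => w y 1 * psiA φ 1 y)
          (w x 1 • ((fderiv ℝ (fderiv ℝ φ) x).flip (Pi.single 1 1)) +
            psiA φ 1 x • ((ContinuousLinearMap.proj 1).comp (fderiv ℝ w x))) x :=
        (hv x hx).mul (hψd 1 x)
      have hm0 : HasFDerivAt (fun y => w y 1 * psiA φ 0 y)
          (w x 1 • ((fderiv ℝ (fderiv ℝ φ) x).flip (Pi.single 0 1)) +
            psiA φ 0 x • ((ContinuousLinearMap.proj 1).comp (fderiv ℝ w x))) x :=
        (hv x hx).mul (hψd 0 x)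
      rw [e0, e1, (show HasFDerivAt (fun y => -(w y 1 * psiA φ 1 y)) _ x from hm1.neg).fderiv, hm0.fderiv]
      have hsym : fderiv ℝ (fderiv ℝ φ) x (Pi.single 0 1) (Pi.single 1 1)
          = fderiv ℝ (fderiv ℝ φ) x (Pi.single 1 1) (Pi.single 0 1) :=
        (hφ.contDiffAt.isSymmSndFDerivAt (by rw [minSmoothness_of_isRCLikeNormedField]; exact WithTop.coe_le_coe.mpr (le_top : (2:ℕ∞) ≤ ⊤))) _ _
      simp only [hdef, psiA, ContinuousLinearMap.neg_apply, ContinuousLinearMap.add_apply,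
        ContinuousLinearMap.smul_apply, ContinuousLinearMap.flip_apply,
        ContinuousLinearMap.coe_comp', Function.comp_apply, ContinuousLinearMap.proj_apply,
        smul_eq_mul]
      rw [hsym]; ring
    · have hx' : x ∉ tsupport φ := fun hh => hx (hsupp hh)
      have z0 : fderiv ℝ (gA w φ 0) x = 0 := by
        rw [(hgev 0 x hx).fderiv_eq]; exact fderiv_const_apply 0
      have z1 : fderiv ℝ (gA w φ 1) x = 0 := by
        rw [(hgev 1 x hx).fderiv_eq]; exact fderiv_const_apply 0
      rw [z0, z1, hh0 x hx']; simp
  -- choose a big box containing the support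
  obtain ⟨R, hR⟩ := hφc.isBounded.subset_closedBall 0
  set bb : Fin 2 → ℝ := fun _ => |R| + 1 with hbb
  set aa : Fin 2 → ℝ := fun _ => -(|R| + 1) with haa
  have hab : aa ≤ bb := fun i => by
    simp only [haa, hbb]
    linarith [abs_nonneg R]
  have hbox : tsupport φ ⊆ Set.Icc aa bb := by
    intro x hx
    have hn : ‖x‖ ≤ R := by
      simpa [dist_zero_right] using hR hx
    constructor <;> intro i <;>
    · have h1 : |x i| ≤ ‖x‖ := by
        simpa [Real.norm_eq_abs] using norm_le_pi_norm x i
      have h2 := abs_le.mp (h1.trans (hn.trans (le_abs_self R)))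
      simp only [haa, hbb]
      linarith [h2.1, h2.2]
  have hΩz : ∀ x ∉ Ω, h x = 0 := fun x hx => hh0 x (fun hs => hx (hsupp hs))
  have hIccz : ∀ x ∉ Set.Icc aa bb, h x = 0 := fun x hx => hh0 x (fun hs => hx (hbox hs))
  have hsupph : Function.support h ⊆ Ω := fun x hx => by
    by_contra hc; exact hx (hΩz x hc)
  have hInt : Integrable h :=
    (integrableOn_iff_integrable_of_support_subset hsupph).mp hi
  have hdivEq : (fun x => ∑ i : Fin 2, fderiv ℝ (gA w φ i) x (Pi.single i 1)) = h :=
    funext hdiv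
  have hIcc : IntegrableOn (fun x => ∑ i : Fin 2, fderiv ℝ (gA w φ i) x (Pi.single i 1))
      (Set.Icc aa bb) := by
    rw [hdivEq]; exact hInt.integrableOn
  have key := integral_divergence_of_hasFDerivAt_off_countable (a := aa) (b := bb) hab
    (fun x i => gA w φ i x) (fun x => ContinuousLinearMap.pi fun i => fderiv ℝ (gA w φ i) x)
    ∅ Set.countable_empty
    (continuousOn_pi.2 fun i => (Differentiable.continuous fun x => hgd i x).continuousOn)
    (fun x _ => hasFDerivAt_pi.2 fun i => (hgd i x).hasFDerivAt)
    (by simpa using hIcc)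
  have hfz : ∀ (i : Fin 2) (cv : ℝ), |cv| = |R| + 1 →
      ∀ y : Fin 1 → ℝ, gA w φ i (i.insertNth cv y) = 0 := by
    intro i cv hcv y
    refine gA_eq_zero (hfd0 _ ?_) i
    intro hmem
    have h1 : ‖(i.insertNth cv y : Fin 2 → ℝ)‖ ≤ R := by
      simpa [dist_zero_right] using hR hmem
    have h2 : |cv| ≤ ‖(i.insertNth cv y : Fin 2 → ℝ)‖ := by
      simpa [Fin.insertNth_apply_same, Real.norm_eq_abs] using
        norm_le_pi_norm (i.insertNth cv y : Fin 2 → ℝ) i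
    rw [hcv] at h2
    have h3 : R ≤ |R| := le_abs_self R
    linarith
  have habs1 : |(|R| + 1)| = |R| + 1 := abs_of_nonneg (by linarith [abs_nonneg R])
  have habs2 : |(-(|R| + 1))| = |R| + 1 := by rw [abs_neg]; exact habs1
  calc ∫ x in Ω, h x = ∫ x, h x := setIntegral_eq_integral_of_forall_compl_eq_zero hΩz
    _ = ∫ x in Set.Icc aa bb, h x :=
        (setIntegral_eq_integral_of_forall_compl_eq_zero hIccz).symm
    _ = 0 := by
        rw [← hdivEq] at *
        rw [show (fun x => ∑ i : Fin 2, fderiv ℝ (gA w φ i) x (Pi.single i 1))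
            = fun x => ∑ i : Fin 2,
              (ContinuousLinearMap.pi fun i => fderiv ℝ (gA w φ i) x) (Pi.single i 1) i
          from rfl] at *
        rw [key]
        refine Finset.sum_eq_zero fun i _ => ?_
        have hf : ∀ y : Fin 1 → ℝ, gA w φ i (i.insertNth (bb i) y) = 0 :=
          hfz i (bb i) (by simp only [hbb]; exact habs1)
        have hb : ∀ y : Fin 1 → ℝ, gA w φ i (i.insertNth (aa i) y) = 0 :=
          hfz i (aa i) (by simp only [haa]; exact habs2)
        simp [hf, hb]


/-- If ∇w ∈ 𝒦_Λ a.e. in Ω, then there is a measurable uniformly elliptic diagonal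
matrix field A with A∇u + ∇⊥v = 0 a.e., and div(A∇u) = 0 distributionally.
Here `D x i j = ∂ⱼ wᵢ (x)`. -/
theorem stmt_6 (Λ : ℝ) (hΛ : 1 < Λ) (Ω : Set (Fin 2 → ℝ)) (hΩ : IsOpen Ω)
    (w : (Fin 2 → ℝ) → (Fin 2 → ℝ)) (hw : ∀ x ∈ Ω, DifferentiableAt ℝ w x)
    (hK : ∀ᵐ x ∂(volume.restrict Ω),
      (Matrix.of fun i j : Fin 2 => fderiv ℝ w x (Pi.single j 1) i) ∈ Kset Λ) :
    ∃ lam₁ lam₂ : (Fin 2 → ℝ) → ℝ, Measurable lam₁ ∧ Measurable lam₂ ∧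
      (∀ᵐ x ∂(volume.restrict Ω),
        lam₁ x ∈ Set.Icc Λ⁻¹ Λ ∧ lam₂ x ∈ Set.Icc Λ⁻¹ Λ ∧
        -- A(x)∇u(x) + ∇⊥v(x) = 0 :
        lam₁ x * fderiv ℝ w x (Pi.single 0 1) 0 - fderiv ℝ w x (Pi.single 1 1) 1 = 0 ∧
        lam₂ x * fderiv ℝ w x (Pi.single 1 1) 0 + fderiv ℝ w x (Pi.single 0 1) 1 = 0) ∧
      -- div(A ∇u) = 0 in the distributional sense in Ω:
      ∀ φ : (Fin 2 → ℝ) → ℝ, ContDiff ℝ (⊤ : ℕ∞) φ → HasCompactSupport φ → tsupport φ ⊆ Ω →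
        ∫ x in Ω,
          (lam₁ x * fderiv ℝ w x (Pi.single 0 1) 0 * fderiv ℝ φ x (Pi.single 0 1)
            + lam₂ x * fderiv ℝ w x (Pi.single 1 1) 0 * fderiv ℝ φ x (Pi.single 1 1)) = 0 := by
  classical
  have hΛ0 : (0:ℝ) < Λ := lt_trans one_pos hΛ
  have hinv1 : Λ⁻¹ ≤ 1 := by
    rw [inv_le_one_iff₀]; right; exact hΛ.le
  have hinv : Λ⁻¹ ≤ Λ := hinv1.trans hΛ.le
  set lam₁ : (Fin 2 → ℝ) → ℝ := fun x =>
    if fderiv ℝ w x (Pi.single 0 1) 0 = 0 then Λ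
    else fderiv ℝ w x (Pi.single 1 1) 1 / fderiv ℝ w x (Pi.single 0 1) 0 with hl1
  set lam₂ : (Fin 2 → ℝ) → ℝ := fun x =>
    if fderiv ℝ w x (Pi.single 1 1) 0 = 0 then Λ
    else -fderiv ℝ w x (Pi.single 0 1) 1 / fderiv ℝ w x (Pi.single 1 1) 0 with hl2
  have ma : Measurable (fun x => fderiv ℝ w x (Pi.single 0 1) 0) :=
    (measurable_pi_apply 0).comp (measurable_fderiv_apply_const ℝ w _)
  have mb : Measurable (fun x => fderiv ℝ w x (Pi.single 1 1) 0) :=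
    (measurable_pi_apply 0).comp (measurable_fderiv_apply_const ℝ w _)
  have mc : Measurable (fun x => fderiv ℝ w x (Pi.single 0 1) 1) :=
    (measurable_pi_apply 1).comp (measurable_fderiv_apply_const ℝ w _)
  have md : Measurable (fun x => fderiv ℝ w x (Pi.single 1 1) 1) :=
    (measurable_pi_apply 1).comp (measurable_fderiv_apply_const ℝ w _)
  have mlam₁ : Measurable lam₁ := by
    rw [hl1]
    exact Measurable.ite (ma (measurableSet_singleton 0)) measurable_const (md.div ma)
  have mlam₂ : Measurable lam₂ := by
    rw [hl2]
    exact Measurable.ite (mb (measurableSet_singleton 0)) measurable_const (mc.neg.div mb)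
  have key : ∀ᵐ x ∂(volume.restrict Ω),
      lam₁ x ∈ Set.Icc Λ⁻¹ Λ ∧ lam₂ x ∈ Set.Icc Λ⁻¹ Λ ∧
      lam₁ x * fderiv ℝ w x (Pi.single 0 1) 0 - fderiv ℝ w x (Pi.single 1 1) 1 = 0 ∧
      lam₂ x * fderiv ℝ w x (Pi.single 1 1) 0 + fderiv ℝ w x (Pi.single 0 1) 1 = 0 := by
    filter_upwards [hK] with x hx
    obtain ⟨lam, alpha, hlam, halpha, h1, h2⟩ := hx
    simp only [Matrix.of_apply] at h1 h2
    constructor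
    · by_cases hA : fderiv ℝ w x (Pi.single 0 1) 0 = 0
      · simp only [hl1, hA, if_pos rfl]
        exact ⟨hinv, le_rfl⟩
      · simp only [hl1, if_neg hA]
        have hd : fderiv ℝ w x (Pi.single 1 1) 1 = lam * fderiv ℝ w x (Pi.single 0 1) 0 := by
          linarith [h1]
        rw [hd, mul_div_assoc, div_self hA, mul_one]
        rcases hlam with h | h <;> subst h
        · exact ⟨hinv, le_rfl⟩
        · exact ⟨le_rfl, hinv⟩
    refine ⟨?_, ?_, ?_⟩
    · by_cases hB : fderiv ℝ w x (Pi.single 1 1) 0 = 0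
      · simp only [hl2, hB, if_pos rfl]
        exact ⟨hinv, le_rfl⟩
      · simp only [hl2, if_neg hB]
        have hc : -fderiv ℝ w x (Pi.single 0 1) 1 = alpha * fderiv ℝ w x (Pi.single 1 1) 0 := by
          linarith [h2]
        rw [hc, mul_div_assoc, div_self hB, mul_one]
        exact halpha
    · by_cases hA : fderiv ℝ w x (Pi.single 0 1) 0 = 0
      · have hd : fderiv ℝ w x (Pi.single 1 1) 1 = 0 := by
          rw [hA] at h1; linarith [h1]
        simp [hl1, hA, hd]
      · simp only [hl1, if_neg hA]
        field_simp
        ring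
    · by_cases hB : fderiv ℝ w x (Pi.single 1 1) 0 = 0
      · have hc : fderiv ℝ w x (Pi.single 0 1) 1 = 0 := by
          rw [hB] at h2; linarith [h2]
        simp [hl2, hB, hc]
      · simp only [hl2, if_neg hB]
        field_simp
        ring
  refine ⟨lam₁, lam₂, mlam₁, mlam₂, key, ?_⟩
  intro φ hφ hφc hsupp
  by_cases hInt : Integrable (fun x =>
      lam₁ x * fderiv ℝ w x (Pi.single 0 1) 0 * fderiv ℝ φ x (Pi.single 0 1)
        + lam₂ x * fderiv ℝ w x (Pi.single 1 1) 0 * fderiv ℝ φ x (Pi.single 1 1))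
      (volume.restrict Ω)
  · have hae : (fun x =>
        lam₁ x * fderiv ℝ w x (Pi.single 0 1) 0 * fderiv ℝ φ x (Pi.single 0 1)
          + lam₂ x * fderiv ℝ w x (Pi.single 1 1) 0 * fderiv ℝ φ x (Pi.single 1 1))
        =ᵐ[volume.restrict Ω] (fun x =>
        fderiv ℝ w x (Pi.single 1 1) 1 * fderiv ℝ φ x (Pi.single 0 1)
          - fderiv ℝ w x (Pi.single 0 1) 1 * fderiv ℝ φ x (Pi.single 1 1)) := by
      filter_upwards [key] with x hx
      obtain ⟨-, -, e1, e2⟩ := hx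
      have d1 : lam₁ x * fderiv ℝ w x (Pi.single 0 1) 0 = fderiv ℝ w x (Pi.single 1 1) 1 := by
        linarith
      have d2 : lam₂ x * fderiv ℝ w x (Pi.single 1 1) 0 = -fderiv ℝ w x (Pi.single 0 1) 1 := by
        linarith
      rw [d1, d2]; ring
    rw [integral_congr_ae hae]
    exact aux_div Ω hΩ w hw φ hφ hφc hsupp (hInt.congr hae)
  · exact integral_undef hInt
end

section
/- Let Λ > 1, set a := Λ/(Λ−1) and b := 1/(Λ−1), and let x > a + 10. Define γ_j := ((x+j−1)/(x+j)) · ((x+j−a)/(x+j+b)) for j ≥ 1. Then for all n ≥ 1, the product β_n := ∏_{j=1}^n γ_j satisfies β_n ≤ ((x+b+1)/(x+b+n+1))^{2Λ/(Λ−1)}. -/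
/-!
With `b = 1/(Λ-1)` we have `a = 1 + b` and `2Λ/(Λ-1) = 2 + 2b`. Writing `z = x + j`, each factor
`γ_j = (z-1)/z · (z-1-b)/(z+b)` is at most `1 - (2+2b)/(z+b+1)` (the difference is an explicit
nonnegative rational function), and Bernoulli's inequality bounds this by
`((z+b)/(z+b+1))^(2+2b)`. The product of these bounds telescopes.
-/

open Finset

lemma one_sub_div_le_rpow_div_add_one {y s : ℝ} (hy : 0 ≤ y) (hs : 1 ≤ s) :
    1 - s / (y + 1) ≤ (y / (y + 1)) ^ s := by
  have hy1 : 0 < y + 1 := by linarith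
  have hbound : -1 ≤ -1 / (y + 1) := by
    rw [le_div_iff₀ hy1]
    linarith
  calc 1 - s / (y + 1) = 1 + s * (-1 / (y + 1)) := by ring
    _ ≤ (1 + -1 / (y + 1)) ^ s := one_add_mul_self_le_rpow_one_add hbound hs
    _ = (y / (y + 1)) ^ s := by field_simp; ring_nf

lemma staircase_factor_le_one_sub {b z : ℝ} (hb : 0 ≤ b) (hz : 1 + b ≤ z) :
    (z - 1) / z * ((z - (1 + b)) / (z + b)) ≤ 1 - (2 + 2 * b) / (z + b + 1) := by
  have hz0 : 0 < z := by linarith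
  have hgap : 1 - (2 + 2 * b) / (z + b + 1) - (z - 1) / z * ((z - (1 + b)) / (z + b))
      = (b + 1) * (z - (1 + b)) / (z * (z + b) * (z + b + 1)) := by
    field_simp
    ring
  rw [← sub_nonneg, hgap]
  exact div_nonneg (mul_nonneg (by linarith) (by linarith)) (by positivity)

lemma staircase_factor_le_rpow {b z : ℝ} (hb : 0 ≤ b) (hz : 1 + b ≤ z) :
    (z - 1) / z * ((z - (1 + b)) / (z + b)) ≤ ((z + b) / (z + 1 + b)) ^ (2 + 2 * b) := by
  rw [add_right_comm z 1 b]
  exact (staircase_factor_le_one_sub hb hz).trans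
    (one_sub_div_le_rpow_div_add_one (by linarith) (by linarith))

lemma staircase_factor_nonneg {b z : ℝ} (hb : 0 ≤ b) (hz : 1 + b ≤ z) :
    0 ≤ (z - 1) / z * ((z - (1 + b)) / (z + b)) :=
  mul_nonneg (div_nonneg (by linarith) (by linarith)) (div_nonneg (by linarith) (by linarith))

lemma prod_Icc_div_succ {g : ℕ → ℝ} (hg : ∀ j, 1 ≤ j → g j ≠ 0) (n : ℕ) :
    ∏ j ∈ Icc 1 n, g j / g (j + 1) = g 1 / g (n + 1) := by
  induction n with
  | zero => simp [div_self (hg 1 le_rfl)]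
  | succ n ih =>
    rw [prod_Icc_succ_top (by omega), ih]
    field_simp [hg (n + 1) (by omega)]

lemma prod_Icc_le_rpow_of_le_rpow_div {f g : ℕ → ℝ} {s : ℝ} (hf : ∀ j, 1 ≤ j → 0 ≤ f j)
    (hg : ∀ j, 1 ≤ j → 0 < g j) (hfg : ∀ j, 1 ≤ j → f j ≤ (g j / g (j + 1)) ^ s) (n : ℕ) :
    ∏ j ∈ Icc 1 n, f j ≤ (g 1 / g (n + 1)) ^ s := by
  have hmem : ∀ j ∈ Icc 1 n, 1 ≤ j := fun j hj => (mem_Icc.1 hj).1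
  calc ∏ j ∈ Icc 1 n, f j ≤ ∏ j ∈ Icc 1 n, (g j / g (j + 1)) ^ s :=
        prod_le_prod (fun j hj => hf j (hmem j hj)) (fun j hj => hfg j (hmem j hj))
    _ = (∏ j ∈ Icc 1 n, g j / g (j + 1)) ^ s :=
        Real.finsetProd_rpow _ _
          (fun j hj => (div_pos (hg j (hmem j hj)) (hg (j + 1) (by omega))).le) s
    _ = (g 1 / g (n + 1)) ^ s := by
        rw [prod_Icc_div_succ (fun j hj => (hg j hj).ne')]

theorem stmt_7_general (Λ x : ℝ) (hΛ : 1 < Λ)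
    (hx : Λ / (Λ - 1) + 10 < x) (n : ℕ) :
    (∏ j ∈ Finset.Icc 1 n,
        ((x + j - 1) / (x + j)) *
          ((x + j - Λ / (Λ - 1)) / (x + j + 1 / (Λ - 1))))
      ≤ ((x + 1 / (Λ - 1) + 1) / (x + 1 / (Λ - 1) + n + 1)) ^ (2 * Λ / (Λ - 1)) := by
  have hΛ1 : 0 < Λ - 1 := by linarith
  set b := 1 / (Λ - 1) with hb_def
  have hb : 0 ≤ b := (one_div_pos.2 hΛ1).le
  have ha : Λ / (Λ - 1) = 1 + b := by rw [hb_def]; field_simp; ring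
  have hs : 2 * Λ / (Λ - 1) = 2 + 2 * b := by rw [hb_def]; field_simp; ring
  rw [ha] at hx
  rw [ha, hs]
  have hz : ∀ j : ℕ, 1 ≤ j → 1 + b ≤ x + j := fun j hj => by
    have : (1 : ℝ) ≤ j := by exact_mod_cast hj
    linarith
  have key := prod_Icc_le_rpow_of_le_rpow_div (g := fun j : ℕ => x + j + b) (s := 2 + 2 * b)
    (fun j hj => staircase_factor_nonneg hb (hz j hj))
    (fun j hj => by linarith [hz j hj])
    (fun j hj => by
      simpa only [Nat.cast_succ, ← add_assoc] using staircase_factor_le_rpow hb (hz j hj)) n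
  convert key using 3 <;> push_cast <;> ring

theorem stmt_7 (Λ x : ℝ) (hΛ : 1 < Λ)
    (hx : Λ / (Λ - 1) + 10 < x) (n : ℕ) (hn : 1 ≤ n) :
    (∏ j ∈ Finset.Icc 1 n,
        ((x + j - 1) / (x + j)) *
          ((x + j - Λ / (Λ - 1)) / (x + j + 1 / (Λ - 1))))
      ≤ ((x + 1 / (Λ - 1) + 1) / (x + 1 / (Λ - 1) + n + 1)) ^ (2 * Λ / (Λ - 1)) :=
  stmt_7_general Λ x hΛ hx n
end

section
/- Let Λ > 1 and let x > Λ/(Λ−1) + 10. For j ≥ 1 define γ_j := (1 − Λ/(Λ(x+j) − (x+j−1))) · (1 − Λ/((Λ−1)(x+j))). Then there exists a constant c > 0 depending only on Λ and on a lower bound ā for x such that ∏_{j=1}^n γ_j ≥ c · (x/(x+n))^{2Λ/(Λ−1)} for all n ≥ 1. -/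
/-!
Put `K = Λ/(Λ-1)`. Since `Λ(x+j) - (x+j-1) ≥ (Λ-1)(x+j)`, each factor `γ_j` is at least
`(1 - K/(x+j))²`. The function `φ(t) = t^K e^{-K²(K+1)/t}` satisfies
`φ(y)/φ(y+1) ≤ 1 - K/(y+1)` for `y ≥ K` (compare `log` with its tangent line on both sides), so
`∏_{j ≤ n} (1 - K/(x+j)) ≥ φ(x)/φ(x+n) ≥ (x/(x+n))^K e^{-K²(K+1)/ā}`; squaring gives the claim.
-/

open Finset Real

theorem div_le_prod_Icc_of_div_le {α : Type*} [Field α] [LinearOrder α] [IsStrictOrderedRing α]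
    {φ f : ℕ → α} (hφ : ∀ k, 0 < φ k) (n : ℕ)
    (hf : ∀ k < n, φ k / φ (k + 1) ≤ f (k + 1)) :
    φ 0 / φ n ≤ ∏ j ∈ Icc 1 n, f j := by
  induction n with
  | zero => simp [(hφ 0).ne']
  | succ n ih =>
    have ih := ih fun k hk => hf k (by omega)
    calc φ 0 / φ (n + 1) = φ 0 / φ n * (φ n / φ (n + 1)) := by
          field_simp [(hφ n).ne', (hφ (n + 1)).ne']
      _ ≤ (∏ j ∈ Icc 1 n, f j) * f (n + 1) :=
          mul_le_mul ih (hf n n.lt_succ_self) (div_pos (hφ n) (hφ _)).le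
            ((div_pos (hφ 0) (hφ n)).le.trans ih)
      _ = ∏ j ∈ Icc 1 (n + 1), f j := (prod_Icc_succ_top (by omega) f).symm

noncomputable def logWeight (K t : ℝ) : ℝ := K * log t - K ^ 2 * (K + 1) / t

theorem exp_logWeight_div_le {K y : ℝ} (hK : 0 < K) (hy : K ≤ y) :
    exp (logWeight K y) / exp (logWeight K (y + 1)) ≤ 1 - K / (y + 1) := by
  have hy0 : 0 < y := hK.trans_le hy
  have hgap : 0 < y + 1 - K := by linarith
  have hpos : 0 < 1 - K / (y + 1) := by
    rw [sub_pos, div_lt_one (by linarith)]; linarith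
  have hlog_succ : 1 / (y + 1) ≤ log (y + 1) - log y := by
    have := one_sub_inv_le_log_of_pos (div_pos (by linarith : (0 : ℝ) < y + 1) hy0)
    rwa [log_div (by linarith) hy0.ne', inv_div, one_sub_div (by linarith), add_sub_cancel_left]
      at this
  have hlog_one_sub : -(K / (y + 1 - K)) ≤ log (1 - K / (y + 1)) := by
    have := one_sub_inv_le_log_of_pos hpos
    have heq : 1 - (1 - K / (y + 1))⁻¹ = -(K / (y + 1 - K)) := by
      field_simp
      ring
    rwa [heq] at this
  have hquad : K ^ 2 / ((y + 1) * (y + 1 - K)) ≤ K ^ 2 * (K + 1) / (y * (y + 1)) := by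
    rw [div_le_div_iff₀ (by positivity) (by positivity)]
    have hfactor : K ^ 2 * (K + 1) * ((y + 1) * (y + 1 - K)) - K ^ 2 * (y * (y + 1))
        = K ^ 2 * (y + 1) * (K * (y - K) + 1) := by ring
    have : 0 ≤ K ^ 2 * (y + 1) * (K * (y - K) + 1) :=
      mul_nonneg (by positivity) (by nlinarith)
    linarith
  have halg : K / (y + 1 - K) - K / (y + 1) = K ^ 2 / ((y + 1) * (y + 1 - K)) := by
    field_simp
    ring
  have halg' : K ^ 2 * (K + 1) / y - K ^ 2 * (K + 1) / (y + 1)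
      = K ^ 2 * (K + 1) / (y * (y + 1)) := by
    field_simp
    ring
  have hK_log : K / (y + 1) ≤ K * (log (y + 1) - log y) := by
    simpa only [mul_one_div] using mul_le_mul_of_nonneg_left hlog_succ hK.le
  rw [← exp_sub, ← exp_log hpos, exp_le_exp, logWeight, logWeight]
  linarith

theorem rpow_mul_exp_le_exp_logWeight_div {K a x m : ℝ} (hK : 0 ≤ K) (ha : 0 < a) (hax : a ≤ x)
    (hm : 0 ≤ m) :
    (x / (x + m)) ^ K * exp (-(K ^ 2 * (K + 1)) / a)
      ≤ exp (logWeight K x) / exp (logWeight K (x + m)) := by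
  have hx : 0 < x := ha.trans_le hax
  have hC : 0 ≤ K ^ 2 * (K + 1) := by positivity
  have h1 : K ^ 2 * (K + 1) / x ≤ K ^ 2 * (K + 1) / a := div_le_div_of_nonneg_left hC ha hax
  have h2 : 0 ≤ K ^ 2 * (K + 1) / (x + m) := by positivity
  rw [rpow_def_of_pos (by positivity), ← exp_add, ← exp_sub, exp_le_exp,
    log_div hx.ne' (by positivity), logWeight, logWeight, neg_div]
  linarith

theorem one_sub_div_sq_le {Λ y : ℝ} (hΛ : 1 < Λ) (hy : Λ / (Λ - 1) ≤ y) :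
    (1 - Λ / (Λ - 1) / y) ^ 2 ≤
      (1 - Λ / (Λ * y - (y - 1))) * (1 - Λ / ((Λ - 1) * y)) := by
  have hΛ1 : 0 < Λ - 1 := by linarith
  have hy0 : 0 < y := (div_pos (by linarith) hΛ1).trans_le hy
  have hnonneg : 0 ≤ 1 - Λ / ((Λ - 1) * y) := by
    rw [sub_nonneg, ← div_div, div_le_one hy0]; exact hy
  have hden : (Λ - 1) * y ≤ Λ * y - (y - 1) := by linarith
  have hfirst : Λ / (Λ * y - (y - 1)) ≤ Λ / ((Λ - 1) * y) :=
    div_le_div_of_nonneg_left (by linarith) (by positivity) hden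
  rw [sq, div_div]
  exact mul_le_mul_of_nonneg_right (by linarith) hnonneg

theorem stmt_8 (Λ abar : ℝ) (hΛ : 1 < Λ) (habar : Λ / (Λ - 1) + 10 < abar) :
    ∃ c : ℝ, 0 < c ∧ ∀ x : ℝ, abar ≤ x → ∀ n : ℕ, 1 ≤ n →
      c * (x / (x + n)) ^ (2 * Λ / (Λ - 1)) ≤
        ∏ j ∈ Finset.Icc 1 n,
          (1 - Λ / (Λ * (x + j) - (x + j - 1))) * (1 - Λ / ((Λ - 1) * (x + j))) := by
  set K := Λ / (Λ - 1) with hK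
  have hK0 : 0 < K := div_pos (by linarith) (by linarith)
  refine ⟨exp (-(K ^ 2 * (K + 1)) / abar) ^ 2, by positivity, fun x hx n _ => ?_⟩
  have hx0 : 0 < x := by linarith
  have hweight := rpow_mul_exp_le_exp_logWeight_div hK0.le (by linarith) hx (Nat.cast_nonneg n)
  have htele :
      exp (logWeight K x) / exp (logWeight K (x + n)) ≤ ∏ j ∈ Icc 1 n, (1 - K / (x + j)) := by
    simpa using div_le_prod_Icc_of_div_le (φ := fun k => exp (logWeight K (x + k)))
      (fun _ => exp_pos _) n fun k _ => by
        simpa [add_assoc] using exp_logWeight_div_le hK0 (y := x + k) (by linarith)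
  calc exp (-(K ^ 2 * (K + 1)) / abar) ^ 2 * (x / (x + n)) ^ (2 * Λ / (Λ - 1))
      = ((x / (x + n)) ^ K * exp (-(K ^ 2 * (K + 1)) / abar)) ^ 2 := by
        have hexp : 2 * Λ / (Λ - 1) = K * (2 : ℕ) := by rw [hK]; push_cast; ring
        rw [hexp, rpow_mul_natCast (by positivity), mul_pow, mul_comm]
    _ ≤ (∏ j ∈ Icc 1 n, (1 - K / (x + j))) ^ 2 :=
        pow_le_pow_left₀ (by positivity) (hweight.trans htele) 2
    _ = ∏ j ∈ Icc 1 n, (1 - K / (x + j)) ^ 2 := (prod_pow _ _ _).symm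
    _ ≤ _ := prod_le_prod (fun _ _ => sq_nonneg _) fun j _ =>
        one_sub_div_sq_le hΛ (by linarith [(Nat.cast_nonneg j : (0 : ℝ) ≤ j)])
end
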